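/- Let f : X → (−∞,+∞] and g : X → (−∞,+∞] be proper, γ > 0, and define the Douglas–Rachford operator T_DR(x) := {x + z − y : y ∈ prox_{γf}(x), z ∈ prox_{γg}(2y − x)}. If x ∈ Fix T_DR, then there exists y ∈ prox_{γf}(x) such that (1/γ)(x−y) ∈ ∂_p f(y) and (1/γ)(y−x) ∈ ∂_p g(y); in particular 0 ∈ ∂_p f(y) + ∂_p g(y). -/
import Mathlib


open Filter Topology RealInnerProductSpace Pointwise

/-- `f : X → (−∞,+∞]` is proper: it never takes the value `−∞` and is somewhere
finite.  (We model `(−∞,+∞]`-valued functions as `EReal`-valued functions.) -/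
def ProperFn {X : Type*} (f : X → EReal) : Prop :=
  (∃ x, f x ≠ ⊤) ∧ ∀ x, f x ≠ ⊥

/-- The Moreau envelope `^γf(x) = inf_y (f(y) + (1/(2γ))‖x−y‖²)`. -/
noncomputable def moreau {X : Type*} [NormedAddCommGroup X]
    (γ : ℝ) (f : X → EReal) (x : X) : EReal :=
  ⨅ y : X, f y + ((1 / (2 * γ) * ‖x - y‖ ^ 2 : ℝ) : EReal)

/-- The proximal subdifferential `∂_p f(x)`. -/
def psubdiff {X : Type*} [NormedAddCommGroup X] [InnerProductSpace ℝ X]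
    (f : X → EReal) (x : X) : Set X :=
  {v | ∃ γ > (0 : ℝ), ∃ δ > (0 : ℝ), ∀ y ∈ Metric.closedBall x δ,
    ((⟪v, y - x⟫ : ℝ) : EReal) ≤ f y - f x + ((1 / (2 * γ) * ‖y - x‖ ^ 2 : ℝ) : EReal)}

/-- The proximity operator of `h` with parameter `γ`:
`prox_{γh}(x) = {p : h(p) + (1/(2γ))‖x−p‖² ≤ h(w) + (1/(2γ))‖x−w‖² for all w}`. -/
def proxSet {X : Type*} [NormedAddCommGroup X] (γ : ℝ) (h : X → EReal) (x : X) : Set X :=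
  {p | ∀ w : X, h p + ((1 / (2 * γ) * ‖x - p‖ ^ 2 : ℝ) : EReal)
        ≤ h w + ((1 / (2 * γ) * ‖x - w‖ ^ 2 : ℝ) : EReal)}

/-- Key lemma: a prox point gives a proximal subgradient. -/
lemma prox_mem_psubdiff {X : Type*} [NormedAddCommGroup X] [InnerProductSpace ℝ X]
    (h : X → EReal) (hp : ProperFn h) (γ : ℝ) (hγ : 0 < γ) (u p : X)
    (hmem : p ∈ proxSet γ h u) : (1 / γ) • (u - p) ∈ psubdiff h p := by
  obtain ⟨⟨x0, hx0⟩, hbot⟩ := hp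
  -- h p ≠ ⊤
  have hptop : h p ≠ ⊤ := by
    intro htop
    lift h x0 to ℝ using ⟨hx0, hbot x0⟩ with s0 hs0
    have key := hmem x0
    rw [htop, ← hs0, ← EReal.coe_add,
      EReal.top_add_of_ne_bot (EReal.coe_ne_bot _)] at key
    exact (EReal.coe_ne_top _) (top_le_iff.mp key)
  lift h p to ℝ using ⟨hptop, hbot p⟩ with r hr
  refine ⟨γ, hγ, 1, one_pos, fun w _ => ?_⟩
  rw [← hr]
  by_cases hwtop : h w = ⊤
  · rw [hwtop, show (⊤ : EReal) - (r : EReal) = ⊤ from EReal.top_sub_coe r,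
      EReal.top_add_of_ne_bot (EReal.coe_ne_bot _)]
    exact le_top
  · lift h w to ℝ using ⟨hwtop, hbot w⟩ with s hs
    have key := hmem w
    rw [← hr, ← hs, ← EReal.coe_add, ← EReal.coe_add, EReal.coe_le_coe_iff] at key
    rw [← EReal.coe_sub, ← EReal.coe_add, EReal.coe_le_coe_iff]
    have expand : ‖u - w‖ ^ 2 = ‖u - p‖ ^ 2 - 2 * ⟪u - p, w - p⟫ + ‖w - p‖ ^ 2 := by
      have huw : u - w = (u - p) - (w - p) := by abel
      rw [huw, @norm_sub_sq_real]
    have hinner : ⟪(1 / γ) • (u - p), w - p⟫ = (1 / γ) * ⟪u - p, w - p⟫ :=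
      real_inner_smul_left _ _ _
    rw [expand] at key
    rw [hinner]
    have h2 : 1 / γ = 2 * (1 / (2 * γ)) := by field_simp
    rw [h2]
    linarith

/-- If `x` is a fixed point of the Douglas–Rachford operator
`T_DR(x) = {x + z − y : y ∈ prox_{γf}(x), z ∈ prox_{γg}(2y − x)}`, then there is
`y ∈ prox_{γf}(x)` with `(1/γ)(x−y) ∈ ∂_p f(y)` and `(1/γ)(y−x) ∈ ∂_p g(y)`;
in particular `0 ∈ ∂_p f(y) + ∂_p g(y)`. -/
theorem stmt_19 {X : Type*}
    [NormedAddCommGroup X] [InnerProductSpace ℝ X] [FiniteDimensional ℝ X]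
    (f g : X → EReal) (hf : ProperFn f) (hg : ProperFn g)
    (γ : ℝ) (hγ : 0 < γ) (x : X)
    (hx : x ∈ {w | ∃ y ∈ proxSet γ f x, ∃ z ∈ proxSet γ g ((2 : ℝ) • y - x),
      w = x + z - y}) :
    ∃ y ∈ proxSet γ f x,
      (1 / γ) • (x - y) ∈ psubdiff f y ∧
      (1 / γ) • (y - x) ∈ psubdiff g y ∧
      (0 : X) ∈ psubdiff f y + psubdiff g y := by
  obtain ⟨y, hy, z, hz, heq⟩ := hx
  have hzy : z = y := by
    have h' : x + z - y = x := heq.symm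
    have h'' := sub_eq_iff_eq_add.mp h'
    linear_combination (norm := module) h''
  rw [hzy] at hz
  have h1 : (1 / γ) • (x - y) ∈ psubdiff f y := prox_mem_psubdiff f hf γ hγ x y hy
  have h2 : (1 / γ) • (y - x) ∈ psubdiff g y := by
    have hm := prox_mem_psubdiff g hg γ hγ ((2 : ℝ) • y - x) y hz
    have e : (2 : ℝ) • y - x - y = y - x := by
      rw [two_smul]; abel
    rwa [e] at hm
  refine ⟨y, hy, h1, h2, ?_⟩
  have e0 : (0 : X) = (1 / γ) • (x - y) + (1 / γ) • (y - x) := by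
    rw [← smul_add]
    simp [show x - y + (y - x) = 0 by abel]
  rw [e0]
  exact Set.add_mem_add h1 h2
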